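/- In the game i-Mark({1},{2}), the Sprague-Grundy value of any position n satisfies g(n) ≤ 2; moreover g(n) = 0 for every odd n ≥ 5, and g(n) ∈ {1,2} for every even n ≥ 4. -/

import Mathlib

/-- The minimum excludant of a finite set of naturals. -/
noncomputable def mex (s : Finset ℕ) : ℕ := sInf {k : ℕ | k ∉ s}

/-- Options of the game i-Mark(S,D) from a heap of `n` tokens:
move to `n - s` for `s ∈ S` (with `1 ≤ s ≤ n`), or to `n / d` for `d ∈ D`
(with `2 ≤ d` and `d ∣ n`, `n ≥ 1`). -/
def iMarkOptions (S D : Finset ℕ) (n : ℕ) : Finset ℕ :=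
  ((S.filter (fun s => 1 ≤ s ∧ s ≤ n)).image (fun s => n - s)) ∪
  ((D.filter (fun d => 2 ≤ d ∧ d ∣ n ∧ 1 ≤ n)).image (fun d => n / d))

theorem iMarkOptions_lt {S D : Finset ℕ} {n m : ℕ} (h : m ∈ iMarkOptions S D n) : m < n := by
  simp only [iMarkOptions, Finset.mem_union, Finset.mem_image, Finset.mem_filter] at h
  rcases h with ⟨s, ⟨_, h1, h2⟩, rfl⟩ | ⟨d, ⟨_, h2, hd, hn⟩, rfl⟩
  · omega
  · exact Nat.div_lt_self hn h2

/-- The Sprague-Grundy value of a heap of `n` tokens in the game i-Mark(S,D). -/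
noncomputable def grundy (S D : Finset ℕ) (n : ℕ) : ℕ :=
  mex ((iMarkOptions S D n).attach.image (fun m => grundy S D m.1))
termination_by n
decreasing_by exact iMarkOptions_lt m.2

/-- `misereP S D n` means `n` is a P-position of i-Mark(S,D) under misère convention:
`n` has at least one option and every option is an N-position. -/
def misereP (S D : Finset ℕ) (n : ℕ) : Prop :=
  (iMarkOptions S D n).Nonempty ∧
    ∀ m : {x // x ∈ iMarkOptions S D n}, ¬ misereP S D m.1
termination_by n
decreasing_by exact iMarkOptions_lt m.2

/- A heap has Grundy value 0 exactly when none of its options does. In i-Mark({1},{2}) the move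
`n ↦ n - 1` is always available and is the only move from an odd heap, so from 4 on (4 has the
P-position 2 as an option) the zeros alternate with the nonzeros: they are exactly the odd heaps.
The bound `g ≤ 2` holds because the mex of a finite set never exceeds its size. -/

theorem mex_eq_zero_iff {s : Finset ℕ} : mex s = 0 ↔ 0 ∉ s := by
  have hne : {k : ℕ | k ∉ s} ≠ ∅ := Set.nonempty_iff_ne_empty.mp (s.exists_notMem)
  simp [mex, Nat.sInf_eq_zero, hne]

theorem mex_le_card (s : Finset ℕ) : mex s ≤ s.card := by
  have hrange : Finset.range (mex s) ⊆ s := fun k hk => by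
    simpa using Nat.notMem_of_lt_sInf (Finset.mem_range.mp hk)
  simpa using Finset.card_le_card hrange

theorem grundy_eq_mex_image (S D : Finset ℕ) (n : ℕ) :
    grundy S D n = mex ((iMarkOptions S D n).image (grundy S D)) := by
  rw [grundy]
  congr 1
  ext x
  simp

theorem card_iMarkOptions_le (S D : Finset ℕ) (n : ℕ) :
    (iMarkOptions S D n).card ≤ S.card + D.card :=
  (Finset.card_union_le _ _).trans <| add_le_add
    (Finset.card_image_le.trans (Finset.card_filter_le _ _))
    (Finset.card_image_le.trans (Finset.card_filter_le _ _))

theorem grundy_le_card_add_card (S D : Finset ℕ) (n : ℕ) :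
    grundy S D n ≤ S.card + D.card := by
  rw [grundy_eq_mex_image]
  exact (mex_le_card _).trans (Finset.card_image_le.trans (card_iMarkOptions_le S D n))

theorem grundy_eq_zero_iff {S D : Finset ℕ} {n : ℕ} :
    grundy S D n = 0 ↔ ∀ m ∈ iMarkOptions S D n, grundy S D m ≠ 0 := by
  simp [grundy_eq_mex_image S D n, mex_eq_zero_iff]

theorem mem_iMarkOptions_one_two {n m : ℕ} :
    m ∈ iMarkOptions {1} {2} n ↔ 1 ≤ n ∧ (m = n - 1 ∨ 2 ∣ n ∧ m = n / 2) := by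
  simp only [iMarkOptions, Finset.mem_union, Finset.mem_image, Finset.mem_filter,
    Finset.mem_singleton]
  constructor
  · rintro (⟨_, ⟨rfl, h1, _⟩, rfl⟩ | ⟨_, ⟨rfl, _, hdvd, h1⟩, rfl⟩) <;> simp_all
  · rintro ⟨h1, rfl | ⟨hdvd, rfl⟩⟩
    · exact Or.inl ⟨1, ⟨rfl, le_rfl, h1⟩, rfl⟩
    · exact Or.inr ⟨2, ⟨rfl, le_rfl, hdvd, h1⟩, rfl⟩

theorem grundy_one_two_ne_zero_of_mem {n m : ℕ} (hm : m ∈ iMarkOptions {1} {2} n)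
    (h : grundy {1} {2} m = 0) : grundy {1} {2} n ≠ 0 :=
  fun hn => grundy_eq_zero_iff.mp hn m hm h

theorem grundy_one_two_eq_zero_of_odd {n : ℕ} (hodd : Odd n)
    (h : grundy {1} {2} (n - 1) ≠ 0) : grundy {1} {2} n = 0 := by
  refine grundy_eq_zero_iff.mpr fun m hm => ?_
  obtain ⟨_, rfl | ⟨heven, _⟩⟩ := mem_iMarkOptions_one_two.mp hm
  · exact h
  · exact absurd (even_iff_two_dvd.mpr heven) (Nat.not_even_iff_odd.mpr hodd)

theorem grundy_one_two_eq_zero_iff_odd {n : ℕ} (hn : 4 ≤ n) :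
    grundy {1} {2} n = 0 ↔ Odd n := by
  have g0 : grundy {1} {2} 0 = 0 :=
    grundy_eq_zero_iff.mpr fun m hm => by simp [mem_iMarkOptions_one_two] at hm
  have g1 : grundy {1} {2} 1 ≠ 0 :=
    grundy_one_two_ne_zero_of_mem (mem_iMarkOptions_one_two.mpr (by decide)) g0
  have g2 : grundy {1} {2} 2 = 0 :=
    grundy_eq_zero_iff.mpr fun m hm => by
      obtain ⟨_, rfl | ⟨_, rfl⟩⟩ := mem_iMarkOptions_one_two.mp hm <;> exact g1
  induction n, hn using Nat.le_induction with
  | base =>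
    exact iff_of_false
      (grundy_one_two_ne_zero_of_mem (mem_iMarkOptions_one_two.mpr (by decide)) g2) (by decide)
  | succ n hn ih =>
    have hmem : n ∈ iMarkOptions {1} {2} (n + 1) := mem_iMarkOptions_one_two.mpr (by simp)
    rcases Nat.even_or_odd n with heven | hodd
    · have hne : grundy {1} {2} n ≠ 0 := fun h => Nat.not_odd_iff_even.mpr heven (ih.mp h)
      simpa [heven.add_one] using grundy_one_two_eq_zero_of_odd heven.add_one hne
    · simpa [Nat.not_odd_iff_even.mpr hodd.add_one] using
        grundy_one_two_ne_zero_of_mem hmem (ih.mpr hodd)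

/-- Bounds and partial values of the Sprague-Grundy sequence of i-Mark({1},{2}). -/
theorem iMark_1_2_grundy_le_two (n : ℕ) :
    grundy {1} {2} n ≤ 2 ∧
    (Odd n → 5 ≤ n → grundy {1} {2} n = 0) ∧
    (Even n → 4 ≤ n → grundy {1} {2} n = 1 ∨ grundy {1} {2} n = 2) := by
  have hle : grundy {1} {2} n ≤ 2 := grundy_le_card_add_card {1} {2} n
  refine ⟨hle, fun hodd hn => (grundy_one_two_eq_zero_iff_odd (by omega)).mpr hodd,
    fun heven hn => ?_⟩
  have hne : grundy {1} {2} n ≠ 0 := fun h =>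
    Nat.not_odd_iff_even.mpr heven ((grundy_one_two_eq_zero_iff_odd hn).mp h)
  omega
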